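/- Let κ > 0 and λ > 0. There exists (a,b) ∈ ℝ² with (a,b) ≠ (0,0) such that the function v(x) = a·sin(√λ x) + b·cos(√λ x) satisfies the non-local boundary conditions v'(0) = −κ²∫₀¹(1−s)·v(s)ds and v'(1) = κ²∫₀¹ s·v(s)ds, if and only if Det(λ) = 0, where Det(λ) = 2κ²λ^{−1/2}(1−cos√λ)(1+κ²/λ) − sin(√λ)(κ²/√λ+√λ)². -/

import Mathlib

/-!
With `μ = √λ`, both boundary conditions are linear in `(a, b)`: `v'` and the moments
`∫₀¹ (1 - s) v` and `∫₀¹ s v` are computed from explicit antiderivatives. After clearing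
the denominator `μ²` in each condition, the resulting 2×2 system has determinant
`μ⁴ · Det(λ)` (using `sin² + cos² = 1`).
-/

/-- The determinant `Det(λ)` of the 2×2 linear system obtained by imposing the
non-local boundary conditions on `a·sin(√λ x) + b·cos(√λ x)`. -/
noncomputable def Det (κ l : ℝ) : ℝ :=
  2 * κ ^ 2 / Real.sqrt l * (1 - Real.cos (Real.sqrt l)) * (1 + κ ^ 2 / l)
    - Real.sin (Real.sqrt l) * (κ ^ 2 / Real.sqrt l + Real.sqrt l) ^ 2

open Real intervalIntegral

theorem exists_ne_zero_linear_system_iff {R : Type*} [CommRing R] [IsDomain R] (A B C D : R) :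
    (∃ a b : R, (a, b) ≠ (0, 0) ∧ A * a + B * b = 0 ∧ C * a + D * b = 0) ↔
      A * D - B * C = 0 := by
  rw [← Matrix.det_fin_two_of, ← Matrix.exists_mulVec_eq_zero_iff]
  constructor
  · rintro ⟨a, b, hab, h₁, h₂⟩
    refine ⟨![a, b], fun h => hab ?_, ?_⟩
    · simpa using And.intro (congr_fun h 0) (congr_fun h 1)
    · ext i; fin_cases i <;> simp [Matrix.mulVec, dotProduct, Fin.sum_univ_two, h₁, h₂]
  · rintro ⟨v, hv, hMv⟩
    refine ⟨v 0, v 1, fun h => hv ?_, ?_, ?_⟩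
    · ext i; fin_cases i <;> simp_all
    · simpa [Matrix.mulVec, dotProduct, Fin.sum_univ_two] using congr_fun hMv 0
    · simpa [Matrix.mulVec, dotProduct, Fin.sum_univ_two] using congr_fun hMv 1

theorem deriv_sin_mul_add_cos_mul (a b μ x : ℝ) :
    deriv (fun x => a * sin (μ * x) + b * cos (μ * x)) x
      = μ * (a * cos (μ * x) - b * sin (μ * x)) := by
  have hlin := (hasDerivAt_id' x).const_mul μ
  rw [((hlin.sin.const_mul a).fun_add (hlin.cos.const_mul b)).deriv]
  ring

theorem integral_one_sub_mul_sin_mul_add_cos_mul (a b μ : ℝ) (hμ : μ ≠ 0) :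
    ∫ s in (0:ℝ)..1, (1 - s) * (a * sin (μ * s) + b * cos (μ * s))
      = (a * (μ - sin μ) + b * (1 - cos μ)) / μ ^ 2 := by
  have hF : ∀ s, HasDerivAt
      (fun s => (a * (-((1 - s) * μ) * cos (μ * s) - sin (μ * s))
        + b * ((1 - s) * μ * sin (μ * s) - cos (μ * s))) / μ ^ 2)
      ((1 - s) * (a * sin (μ * s) + b * cos (μ * s))) s := by
    intro s
    have hlin := (hasDerivAt_id' s).const_mul μ
    have hw := ((hasDerivAt_id' s).const_sub 1).mul_const μ
    refine ((((hw.fun_neg.fun_mul hlin.cos).fun_sub hlin.sin).const_mul a).fun_add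
      (((hw.fun_mul hlin.sin).fun_sub hlin.cos).const_mul b)).div_const (μ ^ 2) |>.congr_deriv ?_
    field_simp; ring
  rw [integral_eq_sub_of_hasDerivAt (fun s _ => hF s)
    ((by fun_prop : Continuous _).intervalIntegrable 0 1)]
  simp only [mul_zero, mul_one, sin_zero, cos_zero]
  ring

theorem integral_mul_sin_mul_add_cos_mul (a b μ : ℝ) (hμ : μ ≠ 0) :
    ∫ s in (0:ℝ)..1, s * (a * sin (μ * s) + b * cos (μ * s))
      = (a * (sin μ - μ * cos μ) + b * (μ * sin μ + cos μ - 1)) / μ ^ 2 := by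
  have hF : ∀ s, HasDerivAt
      (fun s => (a * (sin (μ * s) - s * μ * cos (μ * s))
        + b * (s * μ * sin (μ * s) + cos (μ * s))) / μ ^ 2)
      (s * (a * sin (μ * s) + b * cos (μ * s))) s := by
    intro s
    have hlin := (hasDerivAt_id' s).const_mul μ
    have hw := (hasDerivAt_id' s).mul_const μ
    refine (((hlin.sin.fun_sub (hw.fun_mul hlin.cos)).const_mul a).fun_add
      (((hw.fun_mul hlin.sin).fun_add hlin.cos).const_mul b)).div_const (μ ^ 2) |>.congr_deriv ?_
    field_simp; ring
  rw [integral_eq_sub_of_hasDerivAt (fun s _ => hF s)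
    ((by fun_prop : Continuous _).intervalIntegrable 0 1)]
  simp only [mul_zero, mul_one, sin_zero, cos_zero]
  ring

theorem left_boundary_condition_iff (κ a b μ : ℝ) (hμ : μ ≠ 0) :
    deriv (fun x => a * sin (μ * x) + b * cos (μ * x)) 0
        = -κ ^ 2 * ∫ s in (0:ℝ)..1, (1 - s) * (a * sin (μ * s) + b * cos (μ * s)) ↔
      (μ ^ 3 + κ ^ 2 * (μ - sin μ)) * a + κ ^ 2 * (1 - cos μ) * b = 0 := by
  rw [deriv_sin_mul_add_cos_mul, integral_one_sub_mul_sin_mul_add_cos_mul a b μ hμ]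
  simp only [mul_zero, sin_zero, cos_zero]
  constructor <;> intro h
  · field_simp at h; linear_combination h
  · field_simp; linear_combination h

theorem right_boundary_condition_iff (κ a b μ : ℝ) (hμ : μ ≠ 0) :
    deriv (fun x => a * sin (μ * x) + b * cos (μ * x)) 1
        = κ ^ 2 * ∫ s in (0:ℝ)..1, s * (a * sin (μ * s) + b * cos (μ * s)) ↔
      (μ ^ 3 * cos μ - κ ^ 2 * (sin μ - μ * cos μ)) * a
        + (-μ ^ 3 * sin μ - κ ^ 2 * (μ * sin μ + cos μ - 1)) * b = 0 := by
  rw [deriv_sin_mul_add_cos_mul, integral_mul_sin_mul_add_cos_mul a b μ hμ]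
  simp only [mul_one]
  constructor <;> intro h
  · field_simp at h; linear_combination h
  · field_simp; linear_combination h

theorem boundary_system_det_eq (κ μ : ℝ) (hμ : 0 < μ) :
    (μ ^ 3 + κ ^ 2 * (μ - sin μ)) * (-μ ^ 3 * sin μ - κ ^ 2 * (μ * sin μ + cos μ - 1))
        - κ ^ 2 * (1 - cos μ) * (μ ^ 3 * cos μ - κ ^ 2 * (sin μ - μ * cos μ))
      = μ ^ 4 * Det κ (μ ^ 2) := by
  rw [Det, sqrt_sq hμ.le]
  field_simp
  linear_combination (μ * κ ^ 4 + μ ^ 3 * κ ^ 2) * sin_sq_add_cos_sq μ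

theorem eigenvalue_iff_det_zero_general (κ l : ℝ) (hl : 0 < l) :
    (∃ a b : ℝ, (a, b) ≠ ((0:ℝ), (0:ℝ)) ∧
      deriv (fun x => a * Real.sin (Real.sqrt l * x)
          + b * Real.cos (Real.sqrt l * x)) 0
        = -κ ^ 2 * ∫ s in (0:ℝ)..1,
            (1 - s) * (a * Real.sin (Real.sqrt l * s)
              + b * Real.cos (Real.sqrt l * s)) ∧
      deriv (fun x => a * Real.sin (Real.sqrt l * x)
          + b * Real.cos (Real.sqrt l * x)) 1
        = κ ^ 2 * ∫ s in (0:ℝ)..1,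
            s * (a * Real.sin (Real.sqrt l * s)
              + b * Real.cos (Real.sqrt l * s))) ↔
    Det κ l = 0 := by
  obtain ⟨μ, hμ, rfl⟩ : ∃ μ > 0, l = μ ^ 2 :=
    ⟨√l, sqrt_pos.2 hl, (sq_sqrt hl.le).symm⟩
  simp only [sqrt_sq hμ.le, left_boundary_condition_iff κ _ _ μ hμ.ne',
    right_boundary_condition_iff κ _ _ μ hμ.ne']
  rw [exists_ne_zero_linear_system_iff, boundary_system_det_eq κ μ hμ, mul_eq_zero,
    or_iff_right (by positivity)]

/-- **Characterization of eigenvalues.** For `κ, λ > 0`, there is a nontrivial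
`(a,b)` such that `v(x) = a·sin(√λ x) + b·cos(√λ x)` satisfies the non-local
boundary conditions `v'(0) = -κ²∫₀¹(1-s)v(s)ds`, `v'(1) = κ²∫₀¹ s·v(s)ds`
iff `Det(λ) = 0`. -/
theorem eigenvalue_iff_det_zero (κ l : ℝ) (hκ : 0 < κ) (hl : 0 < l) :
    (∃ a b : ℝ, (a, b) ≠ ((0:ℝ), (0:ℝ)) ∧
      deriv (fun x => a * Real.sin (Real.sqrt l * x)
          + b * Real.cos (Real.sqrt l * x)) 0
        = -κ ^ 2 * ∫ s in (0:ℝ)..1,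
            (1 - s) * (a * Real.sin (Real.sqrt l * s)
              + b * Real.cos (Real.sqrt l * s)) ∧
      deriv (fun x => a * Real.sin (Real.sqrt l * x)
          + b * Real.cos (Real.sqrt l * x)) 1
        = κ ^ 2 * ∫ s in (0:ℝ)..1,
            s * (a * Real.sin (Real.sqrt l * s)
              + b * Real.cos (Real.sqrt l * s))) ↔
    Det κ l = 0 :=
  eigenvalue_iff_det_zero_general κ l hl
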